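/- Let X be a nonempty set and P = {X_j : j ∈ J} a partition of X with |J| ≥ 2. Then the semigroup generated under composition by the blocks of P ⊗ P^1 (namely R_P together with all X_{j1} × X_{j2} for j1 ≠ j2) equals {∅} ∪ {R_P} ∪ {X_{j1} × X_{j2} : j1, j2 ∈ J}, and R_P is an identity element of this semigroup. -/

import Mathlib

/-- Composition of binary relations viewed as subsets of `X × X`. -/
def rcomp {X : Type*} (A B : Set (X × X)) : Set (X × X) :=
  {p | ∃ z, (p.1, z) ∈ A ∧ (z, p.2) ∈ B}

instance relMul (X : Type*) : Mul (Set (X × X)) := ⟨rcomp⟩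

/-!
Composing rectangles gives `(A ×ˢ B) ∘ (C ×ˢ D) = A ×ˢ D` when `B = C` is nonempty and `∅` when
`B` and `C` are disjoint, and `R_P` fixes every rectangle `X_a × X_b` because the blocks of `P` are
disjoint. So `∅`, `R_P` and the rectangles `X_a × X_b` form a subsemigroup with identity `R_P`.
Conversely it lies in the generated semigroup: with `k ≠ a` (available since `|J| ≥ 2`) we get
`X_a × X_a = (X_a × X_k) ∘ (X_k × X_a)` and `∅ = (X_a × X_k) ∘ (X_a × X_k)`.
-/

open Function

section Rectangles

variable {X : Type*}

theorem rcomp_eq_mul (A B : Set (X × X)) : rcomp A B = A * B := rfl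

@[simp]
theorem rcomp_empty_left (s : Set (X × X)) : rcomp ∅ s = ∅ := by
  ext; simp [rcomp]

@[simp]
theorem rcomp_empty_right (s : Set (X × X)) : rcomp s ∅ = ∅ := by
  ext; simp [rcomp]

theorem rcomp_iUnion_right {ι : Sort*} (A : Set (X × X)) (B : ι → Set (X × X)) :
    rcomp A (⋃ i, B i) = ⋃ i, rcomp A (B i) := by
  ext
  simp only [rcomp, Set.mem_ofPred_eq, Set.mem_iUnion]
  grind

theorem rcomp_prod_prod_of_nonempty {A B C : Set X} (hB : B.Nonempty) :
    rcomp (A ×ˢ B) (B ×ˢ C) = A ×ˢ C := by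
  ext ⟨x, y⟩
  constructor
  · rintro ⟨z, hxz, hzy⟩
    exact ⟨hxz.1, hzy.2⟩
  · rintro ⟨hx, hy⟩
    obtain ⟨z, hz⟩ := hB
    exact ⟨z, ⟨hx, hz⟩, hz, hy⟩

theorem rcomp_prod_prod_of_disjoint {A B C D : Set X} (h : Disjoint B C) :
    rcomp (A ×ˢ B) (C ×ˢ D) = ∅ := by
  ext ⟨x, y⟩
  simp only [Set.mem_empty_iff_false, iff_false]
  rintro ⟨z, hxz, hzy⟩
  exact h.notMem_of_mem_left hxz.2 hzy.1

end Rectangles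

section Partition

variable {X J : Type*} {Xs : J → Set X}

def partitionRel (Xs : J → Set X) : Set (X × X) :=
  ⋃ j, Xs j ×ˢ Xs j

def partitionRectangles (Xs : J → Set X) : Set (Set (X × X)) :=
  insert ∅ (insert (partitionRel Xs) {A | ∃ a b, A = Xs a ×ˢ Xs b})

theorem eq_of_mem_of_pairwise_disjoint (hdisj : Pairwise (Disjoint on Xs)) {i j : J} {x : X}
    (hi : x ∈ Xs i) (hj : x ∈ Xs j) : i = j :=
  hdisj.eq (Set.not_disjoint_iff.2 ⟨x, hi, hj⟩)

theorem rcomp_partitionRel_prod (hdisj : Pairwise (Disjoint on Xs)) (a : J) (B : Set X) :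
    rcomp (partitionRel Xs) (Xs a ×ˢ B) = Xs a ×ˢ B := by
  ext ⟨x, y⟩
  constructor
  · rintro ⟨z, hxz, hzy⟩
    obtain ⟨j, hxj, hzj⟩ := Set.mem_iUnion.1 hxz
    obtain rfl := eq_of_mem_of_pairwise_disjoint hdisj hzj hzy.1
    exact ⟨hxj, hzy.2⟩
  · rintro ⟨hx, hy⟩
    exact ⟨x, Set.mem_iUnion.2 ⟨a, hx, hx⟩, hx, hy⟩

theorem rcomp_prod_partitionRel (hdisj : Pairwise (Disjoint on Xs)) (A : Set X) (b : J) :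
    rcomp (A ×ˢ Xs b) (partitionRel Xs) = A ×ˢ Xs b := by
  ext ⟨x, y⟩
  constructor
  · rintro ⟨z, hxz, hzy⟩
    obtain ⟨j, hzj, hyj⟩ := Set.mem_iUnion.1 hzy
    obtain rfl := eq_of_mem_of_pairwise_disjoint hdisj hzj hxz.2
    exact ⟨hxz.1, hyj⟩
  · rintro ⟨hx, hy⟩
    exact ⟨y, ⟨hx, hy⟩, Set.mem_iUnion.2 ⟨b, hy, hy⟩⟩

theorem rcomp_partitionRel_self (hdisj : Pairwise (Disjoint on Xs)) :
    rcomp (partitionRel Xs) (partitionRel Xs) = partitionRel Xs := by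
  calc rcomp (partitionRel Xs) (partitionRel Xs)
      = ⋃ j, rcomp (partitionRel Xs) (Xs j ×ˢ Xs j) := rcomp_iUnion_right _ _
    _ = partitionRel Xs := by simp only [rcomp_partitionRel_prod hdisj]; rfl

theorem rcomp_partitionRel_of_mem_partitionRectangles (hdisj : Pairwise (Disjoint on Xs)) {s : Set (X × X)}
    (hs : s ∈ partitionRectangles Xs) :
    rcomp (partitionRel Xs) s = s ∧ rcomp s (partitionRel Xs) = s := by
  rcases hs with rfl | rfl | ⟨a, b, rfl⟩
  · simp
  · exact ⟨rcomp_partitionRel_self hdisj, rcomp_partitionRel_self hdisj⟩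
  · exact ⟨rcomp_partitionRel_prod hdisj a _, rcomp_prod_partitionRel hdisj _ b⟩

theorem rcomp_mem_partitionRectangles (hne : ∀ j, (Xs j).Nonempty)
    (hdisj : Pairwise (Disjoint on Xs)) {A B : Set (X × X)}
    (hA : A ∈ partitionRectangles Xs) (hB : B ∈ partitionRectangles Xs) :
    rcomp A B ∈ partitionRectangles Xs := by
  rcases hA with rfl | rfl | ⟨a, b, rfl⟩
  · simp [partitionRectangles]
  · rwa [(rcomp_partitionRel_of_mem_partitionRectangles hdisj hB).1]
  rcases hB with rfl | rfl | ⟨c, d, rfl⟩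
  · simp [partitionRectangles]
  · rw [rcomp_prod_partitionRel hdisj]
    exact Or.inr (Or.inr ⟨a, b, rfl⟩)
  obtain rfl | hbc := eq_or_ne b c
  · rw [rcomp_prod_prod_of_nonempty (hne b)]
    exact Or.inr (Or.inr ⟨a, d, rfl⟩)
  · rw [rcomp_prod_prod_of_disjoint (hdisj hbc)]
    exact Or.inl rfl

def partitionRectanglesSubsemigroup (hne : ∀ j, (Xs j).Nonempty)
    (hdisj : Pairwise (Disjoint on Xs)) : Subsemigroup (Set (X × X)) where
  carrier := partitionRectangles Xs
  mul_mem' := rcomp_mem_partitionRectangles hne hdisj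

theorem closure_partitionRel_offDiag_eq_partitionRectangles [Nontrivial J] (hne : ∀ j, (Xs j).Nonempty)
    (hdisj : Pairwise (Disjoint on Xs)) :
    (Subsemigroup.closure
        (insert (partitionRel Xs) {A | ∃ a b, a ≠ b ∧ A = Xs a ×ˢ Xs b}) : Set (Set (X × X)))
      = partitionRectangles Xs := by
  set S := Subsemigroup.closure
    (insert (partitionRel Xs) {A | ∃ a b, a ≠ b ∧ A = Xs a ×ˢ Xs b})
  have hoff {a b : J} (hab : a ≠ b) : Xs a ×ˢ Xs b ∈ S :=
    Subsemigroup.subset_closure (Or.inr ⟨a, b, hab, rfl⟩)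
  apply le_antisymm
  · refine (Subsemigroup.closure_le (S := partitionRectanglesSubsemigroup hne hdisj)).2 ?_
    rintro A (rfl | ⟨a, b, -, rfl⟩)
    · exact Or.inr (Or.inl rfl)
    · exact Or.inr (Or.inr ⟨a, b, rfl⟩)
  rintro A (rfl | rfl | ⟨a, b, rfl⟩)
  · obtain ⟨k, hka⟩ := exists_ne (Classical.arbitrary J)
    have := S.mul_mem (hoff hka) (hoff hka)
    rwa [← rcomp_eq_mul, rcomp_prod_prod_of_disjoint (hdisj hka.symm)] at this
  · exact Subsemigroup.subset_closure (Or.inl rfl)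
  obtain rfl | hab := eq_or_ne a b
  · obtain ⟨k, hka⟩ := exists_ne a
    have := S.mul_mem (hoff hka.symm) (hoff hka)
    rwa [← rcomp_eq_mul, rcomp_prod_prod_of_nonempty (hne k)] at this
  · exact hoff hab

end Partition

theorem stmt_15_general {X J : Type*} (Xs : J → Set X)
    (hne : ∀ j, (Xs j).Nonempty)
    (hdisj : ∀ j1 j2 : J, j1 ≠ j2 → Disjoint (Xs j1) (Xs j2))
    (hJ : ∃ j1 j2 : J, j1 ≠ j2)
    (RP : Set (X × X)) (hRP : RP = ⋃ j, Xs j ×ˢ Xs j)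
    (G : Set (Set (X × X)))
    (hG : G = insert RP {A : Set (X × X) | ∃ j1 j2 : J, j1 ≠ j2 ∧ A = Xs j1 ×ˢ Xs j2}) :
    (Subsemigroup.closure G : Set (Set (X × X)))
      = insert ∅ (insert RP {A : Set (X × X) | ∃ j1 j2 : J, A = Xs j1 ×ˢ Xs j2}) ∧
    ∀ s ∈ Subsemigroup.closure G, rcomp RP s = s ∧ rcomp s RP = s := by
  have : Nontrivial J := ⟨hJ⟩
  have hdisj' : Pairwise (Disjoint on Xs) := fun i j h => hdisj i j h
  obtain rfl : RP = partitionRel Xs := hRP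
  subst hG
  have hclosure := closure_partitionRel_offDiag_eq_partitionRectangles hne hdisj'
  exact ⟨hclosure, fun s hs => rcomp_partitionRel_of_mem_partitionRectangles hdisj' (hclosure ▸ hs)⟩

theorem stmt_15 {X J : Type*} [Nonempty X] (Xs : J → Set X)
    (hne : ∀ j, (Xs j).Nonempty)
    (hdisj : ∀ j1 j2 : J, j1 ≠ j2 → Disjoint (Xs j1) (Xs j2))
    (hcover : (⋃ j, Xs j) = Set.univ)
    (hJ : ∃ j1 j2 : J, j1 ≠ j2)
    (RP : Set (X × X)) (hRP : RP = ⋃ j, Xs j ×ˢ Xs j)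
    (G : Set (Set (X × X)))
    (hG : G = insert RP {A : Set (X × X) | ∃ j1 j2 : J, j1 ≠ j2 ∧ A = Xs j1 ×ˢ Xs j2}) :
    (Subsemigroup.closure G : Set (Set (X × X)))
      = insert ∅ (insert RP {A : Set (X × X) | ∃ j1 j2 : J, A = Xs j1 ×ˢ Xs j2}) ∧
    ∀ s ∈ Subsemigroup.closure G, rcomp RP s = s ∧ rcomp s RP = s :=
  stmt_15_general Xs hne hdisj hJ RP hRP G hG
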